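/- For every integer N ≥ 1 and complex numbers x₁,…,x_N, y₁,…,y_N with sinh((x_i − y_j)/2) ≠ 0 for all i, j, the Cauchy-type determinant evaluation holds: det_{1≤j,k≤N} [ coth((x_k − y_j)/2) ] = cosh( (∑_{ℓ=1}^N (x_ℓ − y_ℓ))/2 ) · ∏_{1≤i<j≤N} [ sinh((x_i − x_j)/2) · sinh((y_j − y_i)/2) ] / ∏_{i,j=1}^N sinh((x_i − y_j)/2), where in the matrix j is the row index and k the column index. -/

import Mathlib

/-!
The function σ(a, b) = sinh((a - b)/2) = sinh(a/2) cosh(b/2) - cosh(a/2) sinh(b/2) is a 2 × 2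
bracket, so it satisfies the three-term relation σ(a,b) σ(c,d) - σ(a,d) σ(c,b) = σ(a,c) σ(b,d).
This relation makes the Schur complement of the last entry of [1/σ(x_k, y_j)] a row- and
column-rescaled matrix of the same kind, and the Cauchy-type evaluation of det [1/σ(x_k, y_j)]
follows by induction on N.

For the coth matrix write coth w = P + Q with P = e^w/(2 sinh w) and Q = e^(-w)/(2 sinh w). Both
are diagonal rescalings of [1/(2 sinh w)], with determinants e^(±Σ(x - y)/2) det [1/(2 sinh w)],
and P - Q is the all-ones matrix. The determinant is affine along the all-ones direction, hence
det (P + Q) = 2^(N-1) (det P + det Q), which produces the factor cosh(Σ(x - y)/2).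
-/

open Complex Finset

noncomputable def coth (u : ℂ) : ℂ := Complex.cosh u / Complex.sinh u

theorem Fin.prod_Ioi_castSucc {M : Type*} [CommMonoid M] {n : ℕ} (i : Fin n)
    (f : Fin (n + 1) → M) :
    ∏ j ∈ Ioi i.castSucc, f j = (∏ j ∈ Ioi i, f j.castSucc) * f (Fin.last n) := by
  rw [← Finset.Ioc_top, Fin.top_eq_last, ← Finset.Ioo_insert_right (Fin.castSucc_lt_last i),
    prod_insert (by simp), ← Fin.map_castSuccEmb_Ioi, prod_map, mul_comm]
  rfl

theorem Fin.prod_prod_Ioi_castSucc {M : Type*} [CommMonoid M] {n : ℕ}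
    (g : Fin (n + 1) → Fin (n + 1) → M) :
    ∏ i, ∏ j ∈ Ioi i, g i j =
      (∏ i : Fin n, ∏ j ∈ Ioi i, g i.castSucc j.castSucc) *
        ∏ i : Fin n, g i.castSucc (Fin.last n) := by
  rw [Fin.prod_univ_castSucc, show Ioi (Fin.last n) = ∅ by simp [← Fin.top_eq_last], prod_empty,
    mul_one, ← prod_mul_distrib]
  exact prod_congr rfl fun i _ => Fin.prod_Ioi_castSucc i _

namespace Matrix

section CommRing

variable {n R : Type*} [Fintype n] [DecidableEq n] [CommRing R]

theorem det_of_mul_mul (v w : n → R) (A : Matrix n n R) :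
    det (of fun i j => v i * w j * A i j) = (∏ i, v i) * (∏ j, w j) * det A := by
  rw [mul_assoc, ← det_mul_row, ← det_mul_column]
  simp only [of_apply, mul_assoc]

theorem det_add_const (A : Matrix n n R) (t : R) :
    det (A + of fun _ _ => t) = det A + t * (det (A + of fun _ _ => 1) - det A) := by
  suffices ∃ a c, ∀ t, det (A + of fun _ _ => t) = a + t * c by
    obtain ⟨a, c, hac⟩ := this
    have h0 : det (A + 0) = a + 0 * c := hac 0
    rw [add_zero, zero_mul, add_zero] at h0
    rw [hac t, hac 1, h0]
    ring
  cases isEmpty_or_nonempty n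
  · exact ⟨1, 0, fun t => by simp⟩
  obtain ⟨i₀⟩ := ‹Nonempty n›
  -- subtracting row `i₀` from the other rows leaves `t` in row `i₀` only
  let D : Matrix n n R := of fun i j => A i j - A i₀ j
  refine ⟨det (D.updateRow i₀ (A i₀)), det (D.updateRow i₀ 1), fun t => ?_⟩
  rw [← det_updateRow_smul, ← det_updateRow_add]
  refine det_eq_of_forall_row_eq_smul_add_const (fun i => if i = i₀ then 0 else 1) i₀ (by simp)
    fun i j => ?_
  by_cases hi : i = i₀
  · subst hi
    simp
  · simp [D, hi]
    ring

theorem two_mul_det_add_of_sub_eq_one (P Q : Matrix n n R) (h : ∀ i j, P i j - Q i j = 1) :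
    2 * det (P + Q) = 2 ^ Fintype.card n * (det P + det Q) := by
  have hP : P = Q + of fun _ _ => 1 := by
    ext i j
    simp [← h i j]
  have hPQ : P + Q = (2 : R) • Q + of fun _ _ => 1 := by
    rw [hP, two_smul]
    abel
  have h2P : (2 : R) • P = (2 : R) • Q + of fun _ _ => 2 := by
    rw [hP, smul_add]
    ext i j
    simp
  have := det_add_const ((2 : R) • Q) 2
  rw [← h2P, ← hPQ, det_smul, det_smul] at this
  linear_combination -this

end CommRing

theorem det_succ_eq_last_mul_det_schur {K : Type*} [Field K] {n : ℕ}
    (A : Matrix (Fin (n + 1)) (Fin (n + 1)) K) (h : A (Fin.last n) (Fin.last n) ≠ 0) :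
    A.det = A (Fin.last n) (Fin.last n) * (of fun j k : Fin n => A j.castSucc k.castSucc -
      A j.castSucc (Fin.last n) * A (Fin.last n) k.castSucc / A (Fin.last n) (Fin.last n)).det := by
  set L := Fin.last n
  set B : Matrix (Fin (n + 1)) (Fin (n + 1)) K :=
    of fun j k => A j k + (if k = L then 0 else -(A L k / A L L)) * A j L
  have hAB : A.det = B.det := by
    rw [← det_transpose A, ← det_transpose B]
    exact (det_eq_of_forall_row_eq_smul_add_const _ L (by simp) fun _ _ => rfl).symm
  have hB : ∀ k, k ≠ L → B L k = 0 := fun k hk => by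
    simp [B, hk, h]
  rw [hAB, det_succ_row B L, Fintype.sum_eq_single L fun k hk => by simp [hB k hk],
    Fin.val_last, Even.neg_one_pow ⟨n, rfl⟩, one_mul, Fin.succAbove_last]
  congr 2
  · simp [B]
  · ext j k
    have hk : k.castSucc ≠ L := (Fin.castSucc_lt_last k).ne
    simp only [B, of_apply, submatrix_apply, if_neg hk]
    ring

end Matrix

open Matrix

/-- For `σ a b = a - b` this is Cauchy's determinant. -/
theorem det_inv_eq_of_three_term {K α : Type*} [Field K] (σ : α → α → K)
    (hσ : ∀ a b c d, σ a b * σ c d - σ a d * σ c b = σ a c * σ b d) {n : ℕ} (x y : Fin n → α)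
    (h : ∀ i j, σ (x i) (y j) ≠ 0) :
    det (of fun j k => (σ (x k) (y j))⁻¹) =
      (∏ i, ∏ j ∈ Ioi i, σ (x i) (x j) * σ (y j) (y i)) / ∏ i, ∏ j, σ (x i) (y j) := by
  induction n with
  | zero => simp
  | succ n ih =>
    set L := Fin.last n
    have hschur : det (of fun j k : Fin n => (σ (x k.castSucc) (y j.castSucc))⁻¹ -
        (σ (x L) (y j.castSucc))⁻¹ * (σ (x k.castSucc) (y L))⁻¹ / (σ (x L) (y L))⁻¹) =
        (∏ j : Fin n, σ (y L) (y j.castSucc) / σ (x L) (y j.castSucc)) *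
          (∏ k : Fin n, σ (x k.castSucc) (x L) / σ (x k.castSucc) (y L)) *
          det (of fun j k : Fin n => (σ (x k.castSucc) (y j.castSucc))⁻¹) := by
      rw [← det_of_mul_mul]
      congr 1
      ext j k
      simp only [of_apply]
      field_simp [h]
      linear_combination hσ (x k.castSucc) (y L) (x L) (y j.castSucc)
    rw [det_succ_eq_last_mul_det_schur _ (by simpa using h L L)]
    simp only [of_apply]
    rw [hschur, ih _ _ fun i j => h _ _, Fin.prod_prod_Ioi_castSucc]
    simp only [Fin.prod_univ_castSucc, prod_mul_distrib, prod_div_distrib, L]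
    field_simp

theorem sinh_half_sub_three_term (a b c d : ℂ) :
    sinh ((a - b) / 2) * sinh ((c - d) / 2) - sinh ((a - d) / 2) * sinh ((c - b) / 2) =
      sinh ((a - c) / 2) * sinh ((b - d) / 2) := by
  simp only [sub_div, sinh_sub]
  ring

theorem det_coth_eq_cosh_mul_det_inv_sinh {ι : Type*} [Fintype ι] [DecidableEq ι]
    (x y : ι → ℂ) (h : ∀ i j, sinh ((x i - y j) / 2) ≠ 0) :
    det (of fun j k => coth ((x k - y j) / 2)) =
      cosh ((∑ l, (x l - y l)) / 2) * det (of fun j k => (sinh ((x k - y j) / 2))⁻¹) := by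
  set S : Matrix ι ι ℂ := of fun j k => (2 * sinh ((x k - y j) / 2))⁻¹
  set P : Matrix ι ι ℂ := of fun j k => exp (-(y j / 2)) * exp (x k / 2) * S j k
  set Q : Matrix ι ι ℂ := of fun j k => exp (y j / 2) * exp (-(x k / 2)) * S j k
  have hP : ∀ j k, exp (-(y j / 2)) * exp (x k / 2) = exp ((x k - y j) / 2) := fun j k => by
    rw [← exp_add]
    ring_nf
  have hQ : ∀ j k, exp (y j / 2) * exp (-(x k / 2)) = exp (-((x k - y j) / 2)) := fun j k => by
    rw [← exp_add]
    ring_nf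
  have hsub : ∀ j k, P j k - Q j k = 1 := fun j k => by
    simp only [P, Q, S, of_apply, hP, hQ, ← sub_mul, ← two_sinh]
    exact mul_inv_cancel₀ (mul_ne_zero two_ne_zero (h k j))
  have hadd : P + Q = of fun j k => coth ((x k - y j) / 2) := by
    ext j k
    simp only [P, Q, S, Matrix.add_apply, of_apply, hP, hQ, ← add_mul, ← two_cosh, coth, mul_inv]
    field_simp
  have hS : det S = 2⁻¹ ^ Fintype.card ι * det (of fun j k => (sinh ((x k - y j) / 2))⁻¹) := by
    rw [← det_smul]
    congr 1
    ext j k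
    simp [S, mul_comm]
  set a := (∑ l, (x l - y l)) / 2
  have hdetP : det P = exp a * det S := by
    rw [det_of_mul_mul, ← exp_sum, ← exp_sum, ← exp_add]
    congr 2
    simp only [a, sum_sub_distrib, sum_neg_distrib, ← sum_div]
    ring
  have hdetQ : det Q = exp (-a) * det S := by
    rw [det_of_mul_mul, ← exp_sum, ← exp_sum, ← exp_add]
    congr 2
    simp only [a, sum_sub_distrib, sum_neg_distrib, ← sum_div]
    ring
  have h2 : (2 : ℂ) ^ Fintype.card ι * 2⁻¹ ^ Fintype.card ι = 1 := by
    rw [← mul_pow, mul_inv_cancel₀ two_ne_zero, one_pow]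
  have := two_mul_det_add_of_sub_eq_one P Q hsub
  rw [hadd, hdetP, hdetQ, ← add_mul, ← two_cosh, hS] at this
  linear_combination (1 / 2 : ℂ) * this +
    cosh a * det (of fun j k => (sinh ((x k - y j) / 2))⁻¹) * h2

theorem cauchy_coth_det (N : ℕ) (x y : Fin N → ℂ)
    (hxy : ∀ i j, Complex.sinh ((x i - y j) / 2) ≠ 0) :
    Matrix.det (Matrix.of (fun j k : Fin N => coth ((x k - y j) / 2))) =
      Complex.cosh ((∑ l, (x l - y l)) / 2) *
        (∏ i : Fin N, ∏ j ∈ Finset.Ioi i,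
          (Complex.sinh ((x i - x j) / 2) * Complex.sinh ((y j - y i) / 2))) /
        ∏ i : Fin N, ∏ j : Fin N, Complex.sinh ((x i - y j) / 2) := by
  rw [det_coth_eq_cosh_mul_det_inv_sinh x y hxy, mul_div_assoc,
    det_inv_eq_of_three_term (fun a b => sinh ((a - b) / 2)) sinh_half_sub_three_term x y hxy]
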